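/- arXiv:1307.0964 — 2 statements merged into one kernel-verified Lean document; each statement's English description precedes it below -/
import Mathlib

section
/- Let A be an n×n real matrix with nonnegative entries and suppose A has at least k zero diagonal entries, where 0 ≤ k < n. Then for every positive integer m, (tr A)^m ≤ (n − k)^{m−1} · tr(A^m). -/
open Matrix Polynomial

/-- The eigenvalues of a real square matrix: the multiset of roots (with multiplicity)
of its characteristic polynomial over `ℂ`. -/
noncomputable def eigs {n : ℕ} (A : Matrix (Fin n) (Fin n) ℝ) : Multiset ℂ :=
  ((A.map Complex.ofReal).charpoly).roots

/-- The spectral radius: the maximum of `|λ|` over the eigenvalues `λ`. -/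
noncomputable def specRad {n : ℕ} (A : Matrix (Fin n) (Fin n) ℝ) : ℝ :=
  sSup {r : ℝ | ∃ μ ∈ eigs A, r = ‖μ‖}

/-- The spread: the maximum of `|λ - μ|` over pairs of eigenvalues `λ, μ`. -/
noncomputable def spread {n : ℕ} (A : Matrix (Fin n) (Fin n) ℝ) : ℝ :=
  sSup {r : ℝ | ∃ μ ∈ eigs A, ∃ ν ∈ eigs A, r = ‖μ - ν‖}

/-!
Only the nonzero diagonal entries contribute to `tr A`, and there are at most `n - k` of them,
so the power-mean (Jensen) inequality gives `(tr A)^m ≤ (n - k)^(m-1) · ∑ᵢ (Aᵢᵢ)^m`.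
For a nonnegative matrix, `(Aᵢᵢ)^m ≤ (A^m)ᵢᵢ`, the left side being the weight of the single
closed walk `i → i → ⋯ → i` among all closed walks of length `m` at `i`.
-/

open Finset

lemma Finset.pow_sum_le_card_filter_ne_zero_mul_sum_pow {ι α : Type*} [Semiring α]
    [LinearOrder α] [IsStrictOrderedRing α] [ExistsAddOfLE α] {s : Finset ι} {f : ι → α}
    (hf : ∀ i ∈ s, 0 ≤ f i) (p : ℕ) :
    (∑ i ∈ s, f i) ^ (p + 1) ≤ (#{i ∈ s | f i ≠ 0} : α) ^ p * ∑ i ∈ s, f i ^ (p + 1) := by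
  rw [← sum_filter_ne_zero]
  calc (∑ i ∈ s with f i ≠ 0, f i) ^ (p + 1)
      ≤ (#{i ∈ s | f i ≠ 0} : α) ^ p * ∑ i ∈ s with f i ≠ 0, f i ^ (p + 1) :=
        pow_sum_le_card_mul_sum_pow (fun i hi => hf i (mem_filter.1 hi).1) p
    _ ≤ (#{i ∈ s | f i ≠ 0} : α) ^ p * ∑ i ∈ s, f i ^ (p + 1) := by
        gcongr
        exacts [fun i hi _ => pow_nonneg (hf i hi) _, filter_subset _ s]

namespace Matrix

variable {ι α : Type*} [Fintype ι] [DecidableEq ι]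

lemma apply_self_pow_le_pow_apply_self [Semiring α] [PartialOrder α] [IsOrderedRing α]
    {A : Matrix ι ι α} (hA : ∀ i j, 0 ≤ A i j) (i : ι) (m : ℕ) :
    A i i ^ m ≤ (A ^ m) i i := by
  induction m with
  | zero => simp
  | succ m ih =>
    calc A i i ^ (m + 1) = A i i ^ m * A i i := pow_succ _ _
      _ ≤ (A ^ m) i i * A i i := mul_le_mul_of_nonneg_right ih (hA i i)
      _ ≤ ∑ l, (A ^ m) i l * A l i :=
        single_le_sum (fun l _ => mul_nonneg (pow_apply_nonneg hA m i l) (hA l i)) (mem_univ i)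
      _ = (A ^ (m + 1)) i i := by rw [pow_succ, mul_apply]

lemma trace_pow_le_card_diag_ne_zero_mul_trace_pow [Semiring α] [LinearOrder α]
    [IsStrictOrderedRing α] [ExistsAddOfLE α] {A : Matrix ι ι α} (hA : ∀ i j, 0 ≤ A i j)
    (p : ℕ) :
    A.trace ^ (p + 1) ≤ (#{i | A i i ≠ 0} : α) ^ p * (A ^ (p + 1)).trace := by
  calc A.trace ^ (p + 1) ≤ (#{i | A i i ≠ 0} : α) ^ p * ∑ i, A i i ^ (p + 1) :=
        pow_sum_le_card_filter_ne_zero_mul_sum_pow (fun i _ => hA i i) p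
    _ ≤ (#{i | A i i ≠ 0} : α) ^ p * (A ^ (p + 1)).trace := by
        gcongr
        exact sum_le_sum fun i _ => apply_self_pow_le_pow_apply_self hA i _

end Matrix

theorem jll_ineq_zero_diagonal_general (n k : ℕ) (A : Matrix (Fin n) (Fin n) ℝ)
    (hA : ∀ i j, 0 ≤ A i j)
    (hz : k ≤ (Finset.univ.filter (fun i => A i i = 0)).card)
    (m : ℕ) (hm : 1 ≤ m) :
    (A.trace) ^ m ≤ ((n - k : ℕ) : ℝ) ^ (m - 1) * (A ^ m).trace := by
  obtain ⟨p, rfl⟩ : ∃ p, m = p + 1 := ⟨m - 1, by omega⟩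
  have hcard : #{i | A i i ≠ 0} ≤ n - k := by
    have := card_filter_add_card_filter_not (s := univ) (fun i : Fin n => A i i = 0)
    simp only [card_univ, Fintype.card_fin, ← ne_eq] at this
    omega
  calc A.trace ^ (p + 1) ≤ (#{i | A i i ≠ 0} : ℝ) ^ p * (A ^ (p + 1)).trace :=
        trace_pow_le_card_diag_ne_zero_mul_trace_pow hA p
    _ ≤ ((n - k : ℕ) : ℝ) ^ (p + 1 - 1) * (A ^ (p + 1)).trace := by
        rw [Nat.add_sub_cancel]
        gcongr
        exact sum_nonneg fun i _ => pow_apply_nonneg hA _ i i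

theorem jll_ineq_zero_diagonal (n k : ℕ) (hkn : k < n) (A : Matrix (Fin n) (Fin n) ℝ)
    (hA : ∀ i j, 0 ≤ A i j)
    (hz : k ≤ (Finset.univ.filter (fun i => A i i = 0)).card)
    (m : ℕ) (hm : 1 ≤ m) :
    (A.trace) ^ m ≤ ((n - k : ℕ) : ℝ) ^ (m - 1) * (A ^ m).trace :=
  jll_ineq_zero_diagonal_general n k A hA hz m hm
end

section
/- Let n ≥ 6 and let A be an n×n real matrix with nonnegative entries, spectral radius r(A) = 1, and a_{11} = 0. Then the spread of A satisfies s(A) > 2/(4 + √(2(n + 3))). -/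
open Matrix Polynomial

/-!
Let `λ = x + iy` be an eigenvalue with `|λ| = 1` and suppose all eigenvalues lie within `c ≤ 1/4`
of each other (larger `c` satisfy the final bound trivially). As `conj λ` is an eigenvalue too, `|2y| ≤ c`; as `tr A ≥ 0`, the real parts cannot
all be negative, which forces `x > 0` and hence `1 - x ≤ y² ≤ c²/4`. So every real part lies in
`[x - c, 1]`, which bounds `T = Σ (Re λᵢ - x)²` from above in terms of `tr A`. A lower bound for
`T` comes from `tr A² = Σ Re (λᵢ²) ≤ Σ (Re λᵢ)² - y²` and the Cauchy–Schwarz inequality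
`(tr A)² ≤ (n - 1) tr A²`, which holds because `a₁₁ = 0` and `(A²)ᵢᵢ ≥ aᵢᵢ²`. The two bounds are
compatible only if `(n - 5) c² + 8 c > 2`, and `2 / (4 + √(2(n + 3)))` is the positive root of
`(n - 5) c² + 8 c = 2`.
-/

open ComplexConjugate

section CharpolyRoots

variable {K ι : Type*} [Field K] [IsAlgClosed K] [Fintype ι] [DecidableEq ι]

theorem Matrix.eval_charpoly_eq_prod_roots (M : Matrix ι ι K) (z : K) :
    M.charpoly.eval z = (M.charpoly.roots.map (z - ·)).prod := by
  conv_lhs => rw [(IsAlgClosed.splits M.charpoly).eq_prod_roots_of_monic M.charpoly_monic]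
  simp [eval_multiset_prod, Multiset.map_map]

theorem Matrix.roots_charpoly_mul_self (M : Matrix ι ι K) :
    (M * M).charpoly.roots = M.charpoly.roots.map (· ^ 2) := by
  suffices (M * M).charpoly = ((M.charpoly.roots.map (· ^ 2)).map (X - C ·)).prod by
    rw [this, roots_multiset_prod_X_sub_C]
  refine Polynomial.funext fun w => ?_
  obtain ⟨z, rfl⟩ := IsAlgClosed.exists_pow_nat_eq w two_pos
  have hfactor : scalar ι (z ^ 2) - M * M = (scalar ι z - M) * -(scalar ι (-z) - M) := by
    rw [map_neg, neg_sub, sub_neg_eq_add, map_pow, sq, add_comm,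
      (scalar_commute z (Commute.all z) M).mul_self_sub_mul_self_eq']
  have hcard : Multiset.card M.charpoly.roots = Fintype.card ι := by
    rw [← (IsAlgClosed.splits _).natDegree_eq_card_roots, charpoly_natDegree_eq_dim]
  have hneg : (-1) ^ Fintype.card ι * (M.charpoly.roots.map (-z - ·)).prod
      = (M.charpoly.roots.map (z + ·)).prod := by
    rw [← hcard, ← Multiset.card_map (-z - ·), ← Multiset.prod_map_neg, Multiset.map_map]
    congr! 2 with r
    simp [add_comm]
  rw [eval_charpoly, hfactor, det_mul, det_neg, ← eval_charpoly, ← eval_charpoly,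
    eval_charpoly_eq_prod_roots, eval_charpoly_eq_prod_roots, hneg, ← Multiset.prod_map_mul,
    eval_multiset_prod, Multiset.map_map, Multiset.map_map]
  refine congrArg Multiset.prod (Multiset.map_congr rfl fun r _ => ?_)
  simp only [Function.comp_apply, eval_sub, eval_X, eval_C]
  ring

end CharpolyRoots

theorem Matrix.sq_trace_le_of_nonneg_of_diag_eq_zero {ι : Type*} [Fintype ι] [DecidableEq ι]
    {A : Matrix ι ι ℝ} (hA : ∀ i j, 0 ≤ A i j) {i₀ : ι} (h : A i₀ i₀ = 0) :
    A.trace ^ 2 ≤ (Fintype.card ι - 1) * (A * A).trace := by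
  set s := Finset.univ.erase i₀
  have htrace : A.trace = ∑ i ∈ s, A i i := by
    rw [trace, ← Finset.sum_erase_add _ _ (Finset.mem_univ i₀)]
    simp [h, s]
  have hcard : (s.card : ℝ) = Fintype.card ι - 1 := by
    rw [Finset.card_erase_of_mem (Finset.mem_univ _), Finset.card_univ,
      Nat.cast_pred (Fintype.card_pos_iff.mpr ⟨i₀⟩)]
  have hdiag : ∀ i, A i i ^ 2 ≤ (A * A) i i := fun i => by
    rw [mul_apply, sq]
    exact Finset.single_le_sum (fun k _ => mul_nonneg (hA i k) (hA k i)) (Finset.mem_univ i)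
  calc A.trace ^ 2 ≤ s.card * ∑ i ∈ s, A i i ^ 2 := htrace ▸ sq_sum_le_card_mul_sum_sq
    _ ≤ s.card * ∑ i, (A * A) i i := by
      gcongr
      exact (Finset.sum_le_sum fun i _ => hdiag i).trans <|
        Finset.sum_le_sum_of_subset_of_nonneg (Finset.subset_univ s)
          fun i _ _ => (sq_nonneg _).trans (hdiag i)
    _ = (Fintype.card ι - 1) * (A * A).trace := by rw [hcard]; rfl

section Eigs

variable {n : ℕ} (A : Matrix (Fin n) (Fin n) ℝ)

theorem eigs_eq_aroots : eigs A = A.charpoly.aroots ℂ := by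
  rw [eigs, aroots, ← charpoly_map]
  rfl

theorem card_eigs : Multiset.card (eigs A) = n := by
  rw [eigs, ← (IsAlgClosed.splits _).natDegree_eq_card_roots, charpoly_natDegree_eq_dim,
    Fintype.card_fin]

theorem sum_eigs : (eigs A).sum = A.trace := by
  rw [eigs, ← trace_eq_sum_roots_charpoly]
  simp [trace]

theorem eigs_mul_self : eigs (A * A) = (eigs A).map (· ^ 2) := by
  have h : (A * A).map Complex.ofReal = A.map Complex.ofReal * A.map Complex.ofReal :=
    Matrix.map_mul (f := Complex.ofRealHom)
  rw [eigs, h, roots_charpoly_mul_self]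
  rfl

theorem conj_mem_eigs {z : ℂ} (hz : z ∈ eigs A) : conj z ∈ eigs A := by
  rw [eigs_eq_aroots, mem_aroots] at hz ⊢
  refine ⟨hz.1, ?_⟩
  rw [← Complex.conjAe_coe, aeval_algHom_apply, hz.2, map_zero]

theorem finite_norm_eigs : {r : ℝ | ∃ μ ∈ eigs A, r = ‖μ‖}.Finite :=
  ((Multiset.finite_toSet (eigs A)).image (‖·‖)).subset fun _ ⟨μ, hμ, hr⟩ => ⟨μ, hμ, hr.symm⟩

theorem norm_le_specRad {z : ℂ} (hz : z ∈ eigs A) : ‖z‖ ≤ specRad A :=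
  le_csSup (finite_norm_eigs A).bddAbove ⟨z, hz, rfl⟩

theorem exists_norm_eq_specRad (hn : 0 < n) : ∃ z ∈ eigs A, ‖z‖ = specRad A := by
  obtain ⟨z, hz⟩ := Multiset.card_pos_iff_exists_mem.mp ((card_eigs A).symm ▸ hn)
  have hne : {r : ℝ | ∃ μ ∈ eigs A, r = ‖μ‖}.Nonempty := ⟨_, z, hz, rfl⟩
  obtain ⟨w, hw, hr⟩ := hne.csSup_mem (finite_norm_eigs A)
  exact ⟨w, hw, hr.symm⟩

theorem finite_norm_sub_eigs : {r : ℝ | ∃ μ ∈ eigs A, ∃ ν ∈ eigs A, r = ‖μ - ν‖}.Finite := by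
  refine (((Multiset.finite_toSet (eigs A)).prod (Multiset.finite_toSet (eigs A))).image
    fun p : ℂ × ℂ => ‖p.1 - p.2‖).subset ?_
  rintro _ ⟨μ, hμ, ν, hν, rfl⟩
  exact ⟨(μ, ν), ⟨hμ, hν⟩, rfl⟩

theorem norm_sub_le_spread {z w : ℂ} (hz : z ∈ eigs A) (hw : w ∈ eigs A) :
    ‖z - w‖ ≤ spread A :=
  le_csSup (finite_norm_sub_eigs A).bddAbove ⟨z, hz, w, hw, rfl⟩

end Eigs

theorem Multiset.sum_map_sq_le_of_mem_Icc {α : Type*} {s : Multiset α} {f : α → ℝ} {a b : ℝ}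
    (h : ∀ i ∈ s, f i ∈ Set.Icc a b) :
    (s.map fun i => f i ^ 2).sum ≤ (a + b) * (s.map f).sum - card s * (a * b) := by
  calc (s.map fun i => f i ^ 2).sum ≤ (s.map fun i => (a + b) * f i - a * b).sum := by
        refine Multiset.sum_map_le_sum_map _ _ fun i hi => ?_
        obtain ⟨ha, hb⟩ := h i hi
        nlinarith
    _ = (a + b) * (s.map f).sum - card s * (a * b) := by
        simp [Multiset.sum_map_sub, Multiset.sum_map_mul_left]

theorem Complex.re_multiset_sum (s : Multiset ℂ) : s.sum.re = (s.map re).sum :=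
  map_multiset_sum reAddGroupHom s

theorem Complex.re_sq_add_im_sq (z : ℂ) : z.re ^ 2 + z.im ^ 2 = ‖z‖ ^ 2 := by
  rw [Complex.sq_norm, Complex.normSq_apply]
  ring

theorem Complex.norm_sub_conj (z : ℂ) : ‖z - conj z‖ = 2 * |z.im| := by
  rw [Complex.sub_conj, norm_mul, Complex.norm_I, mul_one, Complex.norm_real, Real.norm_eq_abs,
    abs_mul, abs_two]

theorem two_lt_of_quadratic_le {n c η x u : ℝ} (hn : 5 ≤ n) (hc : 0 ≤ c) (hη₀ : 0 ≤ η)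
    (hη : η ≤ c ^ 2 / 4) (hx : x ≤ 1)
    (h : u ^ 2 + (n - 1) ≤ (n - 1) * ((η - c) * (u - x) + n * η * c)) :
    2 < (n - 5) * c ^ 2 + 8 * c := by
  by_contra! hle
  have hc4 : c ≤ 1 / 4 := by nlinarith
  have hηc : η ≤ c := by nlinarith
  have hnc : n * c ^ 2 ≤ 2 := by nlinarith
  have hnηc : n * η * c ≤ c / 2 := by
    nlinarith [mul_le_mul_of_nonneg_left hη (by positivity : 0 ≤ n * c)]
  have hw : (n - 1) * (c - η) ^ 2 ≤ 2 - 8 * c + 4 * c ^ 2 := by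
    nlinarith [pow_le_pow_left₀ (sub_nonneg.mpr hηc) (sub_le_self c hη₀) 2]
  have hwx : (c - η) * x ≤ c := by nlinarith
  have hν : 0 < n - 1 := by linarith
  have hpos : 0 < (n - 1) * (1 + c - 2 * c ^ 2) := mul_pos hν (by nlinarith)
  -- complete the square in `u`
  nlinarith [sq_nonneg (2 * u + (n - 1) * (c - η)), mul_le_mul_of_nonneg_left hw hν.le,
    mul_le_mul_of_nonneg_left hwx hν.le, mul_le_mul_of_nonneg_left hnηc hν.le]

theorem one_sub_re_le_of_forall_norm_sub_le {s : Multiset ℂ} {c : ℝ} {l : ℂ} (hc : c ≤ 1 / 4)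
    (hl : l ∈ s) (hl1 : ‖l‖ = 1) (hlconj : conj l ∈ s)
    (hdist : ∀ z ∈ s, ∀ w ∈ s, ‖z - w‖ ≤ c) (hsum : 0 ≤ s.sum.re) :
    1 - l.re ≤ c ^ 2 / 4 := by
  have hxy : l.re ^ 2 + l.im ^ 2 = 1 := by rw [Complex.re_sq_add_im_sq, hl1, one_pow]
  have hy : 2 * |l.im| ≤ c := l.norm_sub_conj ▸ hdist l hl _ hlconj
  have hy2 : l.im ^ 2 ≤ c ^ 2 / 4 := by nlinarith [sq_abs l.im, abs_nonneg l.im]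
  suffices 0 < l.re by nlinarith
  by_contra! hx
  have hxc : l.re + c < 0 := by nlinarith
  have hle : s.sum.re ≤ Multiset.card s * (l.re + c) := by
    rw [Complex.re_multiset_sum, ← nsmul_eq_mul, ← Multiset.card_map Complex.re s]
    refine Multiset.sum_le_card_nsmul _ _ fun r hr => ?_
    obtain ⟨z, hz, rfl⟩ := Multiset.mem_map.mp hr
    have hclose := abs_le.mp ((Complex.abs_re_le_norm (z - l)).trans (hdist z hz l hl))
    rw [Complex.sub_re] at hclose
    linarith [hclose.2]
  have hcard : (0 : ℝ) < Multiset.card s := by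
    exact_mod_cast Multiset.card_pos_iff_exists_mem.mpr ⟨l, hl⟩
  nlinarith

theorem two_lt_of_forall_norm_sub_le {s : Multiset ℂ} {c : ℝ} {l : ℂ}
    (hs : 5 ≤ Multiset.card s) (hnorm : ∀ z ∈ s, ‖z‖ ≤ 1) (hl : l ∈ s) (hl1 : ‖l‖ = 1)
    (hlconj : conj l ∈ s) (hdist : ∀ z ∈ s, ∀ w ∈ s, ‖z - w‖ ≤ c) (hsum : 0 ≤ s.sum.re)
    (hsq : s.sum.re ^ 2 ≤ (Multiset.card s - 1) * (s.map (· ^ 2)).sum.re) :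
    2 < (Multiset.card s - 5) * c ^ 2 + 8 * c := by
  set n : ℝ := (Multiset.card s : ℝ)
  have hn : 5 ≤ n := by simp only [n]; exact_mod_cast hs
  have hc : 0 ≤ c := by simpa using hdist l hl l hl
  rcases lt_or_ge (1 / 4) c with hc4 | hc4
  · nlinarith
  have hη := one_sub_re_le_of_forall_norm_sub_le hc4 hl hl1 hlconj hdist hsum
  set x := l.re
  have hx1 : x ≤ 1 := hl1 ▸ Complex.re_le_norm l
  have hre : ∀ z ∈ s, z.re - x ∈ Set.Icc (-c) (1 - x) := fun z hz =>
    ⟨(abs_le.mp ((Complex.abs_re_le_norm (z - l)).trans (hdist z hz l hl))).1,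
      by linarith [(Complex.re_le_norm z).trans (hnorm z hz)]⟩
  have hT := Multiset.sum_map_sq_le_of_mem_Icc hre
  simp only [sub_sq, Multiset.sum_map_add, Multiset.sum_map_sub, Multiset.sum_map_mul_right,
    Multiset.sum_map_mul_left, Multiset.map_const', Multiset.sum_replicate, nsmul_eq_mul] at hT
  have hsq_re : (s.map (· ^ 2)).sum.re
      = (s.map fun z => z.re ^ 2).sum - (s.map fun z => z.im ^ 2).sum := by
    rw [Complex.re_multiset_sum, Multiset.map_map, ← Multiset.sum_map_sub]
    simp [sq]
  have him : l.im ^ 2 ≤ (s.map fun z => z.im ^ 2).sum :=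
    Multiset.single_le_sum
      (fun _ hr => by obtain ⟨z, _, rfl⟩ := Multiset.mem_map.mp hr; positivity)
      _ (Multiset.mem_map_of_mem _ hl)
  have hxy : x ^ 2 + l.im ^ 2 = 1 := by rw [Complex.re_sq_add_im_sq, hl1, one_pow]
  rw [Complex.re_multiset_sum] at hsq
  set m := (s.map Complex.re).sum
  set S := (s.map fun z => z.re ^ 2).sum
  have hν : (0 : ℝ) ≤ n - 1 := by linarith
  have hvar : (m - (n - 1) * x) ^ 2 + (n - 1) ≤ (n - 1) * (S - 2 * m * x + n * x ^ 2) := by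
    nlinarith [mul_le_mul_of_nonneg_left him hν]
  refine two_lt_of_quadratic_le (η := 1 - x) hn hc (by linarith) hη hx1 (hvar.trans ?_)
  linarith [mul_le_mul_of_nonneg_left hT hν]

theorem sub_five_mul_sq_add_eight_mul_eq_two {x : ℝ} (hx : 0 ≤ x + 3) :
    (x - 5) * (2 / (4 + √(2 * (x + 3)))) ^ 2 + 8 * (2 / (4 + √(2 * (x + 3)))) = 2 := by
  have hR : √(2 * (x + 3)) ^ 2 = 2 * (x + 3) := Real.sq_sqrt (by linarith)
  have hpos : 0 < 4 + √(2 * (x + 3)) := by positivity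
  field_simp
  linear_combination (-1) * hR

theorem spread_gt_of_n_ge_six (n : ℕ) (hn : 6 ≤ n) (A : Matrix (Fin n) (Fin n) ℝ)
    (hA : ∀ i j, 0 ≤ A i j) (hr : specRad A = 1)
    (h11 : A ⟨0, by omega⟩ ⟨0, by omega⟩ = 0) :
    2 / (4 + Real.sqrt (2 * ((n : ℝ) + 3))) < spread A := by
  obtain ⟨l, hl, hl1⟩ := exists_norm_eq_specRad A (by omega)
  have hbound := two_lt_of_forall_norm_sub_le (s := eigs A) (by rw [card_eigs]; omega)
    (fun z hz => hr ▸ norm_le_specRad A hz) hl (hl1.trans hr) (conj_mem_eigs A hl)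
    (fun z hz w hw => norm_sub_le_spread A hz hw)
    (by rw [sum_eigs, Complex.ofReal_re]; exact Finset.sum_nonneg fun i _ => hA i i)
    (by simpa [← eigs_mul_self, sum_eigs, card_eigs]
      using sq_trace_le_of_nonneg_of_diag_eq_zero hA h11)
  rw [card_eigs] at hbound
  have hroot := sub_five_mul_sq_add_eight_mul_eq_two (x := n) (by positivity)
  have hspread : 0 ≤ spread A := by simpa using norm_sub_le_spread A hl hl
  have hn5 : (5 : ℝ) ≤ n := by exact_mod_cast (by omega : 5 ≤ n)
  by_contra! hle
  nlinarith [pow_le_pow_left₀ hspread hle 2]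
end
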